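/- arXiv:2005.13390 — 4 statements merged into one kernel-verified Lean document; each statement's English description precedes it below -/
import Mathlib

section
/- (Elman estimate for weighted GMRES; Theorem 5.6 of the paper.) Let D ∈ ℂ^{N×N} be Hermitian positive definite and let C ∈ ℂ^{N×N} be such that δ := dist(0, W_D(C)) > 0 (i.e. 0 ∉ W_D(C)). Then δ ≤ ‖C‖_D, and for every d ∈ ℂ^N, every initial guess x⁰ ∈ ℂ^N with initial residual r⁰ := C x⁰ − d, and every m ∈ ℕ, the m-th weighted GMRES residual satisfies min{ ‖C x − d‖_D : x ∈ x⁰ + K^m(C, r⁰) } ≤ (1 − (δ/‖C‖_D)²)^{m/2} · ‖r⁰‖_D; equivalently, with β ∈ [0, π/2) defined by cos β = δ/‖C‖_D, the m-th residual is at most (sin β)^m ‖r⁰‖_D. -/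
open scoped ComplexOrder

noncomputable section

/-- The Euclidean inner product on `ℂ^N`, linear in the first argument. -/
def inner2 {N : ℕ} (x y : Fin N → ℂ) : ℂ := ∑ i, x i * (starRingEnd ℂ) (y i)

/-- The weighted inner product `(x,y)_D := (D x, y)₂`. -/
def innerW {N : ℕ} (D : Matrix (Fin N) (Fin N) ℂ) (x y : Fin N → ℂ) : ℂ :=
  inner2 (D.mulVec x) y

/-- The weighted norm `‖x‖_D := (x,x)_D^{1/2}`. -/
def normW {N : ℕ} (D : Matrix (Fin N) (Fin N) ℂ) (x : Fin N → ℂ) : ℝ :=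
  Real.sqrt (innerW D x x).re

/-- The matrix norm induced by the weighted norm `‖·‖_D`. -/
def opNormW {N : ℕ} (D C : Matrix (Fin N) (Fin N) ℂ) : ℝ :=
  sSup {t : ℝ | ∃ x : Fin N → ℂ, x ≠ 0 ∧ t = normW D (C.mulVec x) / normW D x}

/-- The numerical range `W_D(C) := { (C x, x)_D : ‖x‖_D = 1 }`. -/
def numRange {N : ℕ} (D C : Matrix (Fin N) (Fin N) ℂ) : Set ℂ :=
  {z | ∃ x : Fin N → ℂ, normW D x = 1 ∧ z = innerW D (C.mulVec x) x}

/-- The `m`-th Krylov space `K^m(C,r) := span{C^j r : 0 ≤ j ≤ m-1}`. -/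
def krylov {N : ℕ} (C : Matrix (Fin N) (Fin N) ℂ) (r : Fin N → ℂ) (m : ℕ) :
    Submodule ℂ (Fin N → ℂ) :=
  Submodule.span ℂ {v | ∃ j < m, v = (C ^ j).mulVec r}

open scoped InnerProductSpace Matrix

/-!
Write `D = Sᴴ S` with `S` invertible, so that `(x, y)_D = ⟪S y, S x⟫` and `‖x‖_D = ‖S x‖₂`. For a
residual `r`, subtracting from `r` its projection onto `C r` gives
`‖r - α C r‖²_D = ‖r‖²_D - |(C r, r)_D|² / ‖C r‖²_D ≤ (1 - (δ / ‖C‖_D)²) ‖r‖²_D`,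
because `|(C r, r)_D| ≥ δ ‖r‖²_D` (rescale `r` into the numerical range) and
`‖C r‖_D ≤ ‖C‖_D ‖r‖_D`. Starting from `x⁰` and applying this minimal residual step `m` times,
`x ↦ x - α (C x - d)`, produces an iterate in `x⁰ + K^m(C, r⁰)`, whose residual bounds the GMRES
residual from above.
-/

section ProjectionOntoLine
variable {𝕜 E : Type*} [RCLike 𝕜] [NormedAddCommGroup E] [InnerProductSpace 𝕜 E]

theorem norm_sq_sub_inner_div_smul (v : E) {w : E} (hw : w ≠ 0) :
    ‖v - (⟪w, v⟫_𝕜 / ((‖w‖ ^ 2 : ℝ) : 𝕜)) • w‖ ^ 2 = ‖v‖ ^ 2 - ‖⟪w, v⟫_𝕜‖ ^ 2 / ‖w‖ ^ 2 := by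
  have hw' : ‖w‖ ≠ 0 := norm_ne_zero_iff.mpr hw
  rw [@norm_sub_sq 𝕜, inner_smul_right, norm_smul, norm_div, RCLike.norm_ofReal,
    abs_of_nonneg (by positivity), ← inner_conj_symm, div_mul_eq_mul_div, RCLike.conj_mul,
    RCLike.norm_conj]
  simp only [← RCLike.ofReal_pow, ← RCLike.ofReal_div, RCLike.ofReal_re]
  field_simp
  ring

theorem exists_norm_sub_smul_le {v w : E} {δ M : ℝ} (hδ : 0 ≤ δ)
    (hvw : δ * ‖v‖ ^ 2 ≤ ‖⟪v, w⟫_𝕜‖) (hw : ‖w‖ ≤ M * ‖v‖) :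
    ∃ α : 𝕜, ‖v - α • w‖ ≤ √(1 - (δ / M) ^ 2) * ‖v‖ := by
  rcases eq_or_ne w 0 with rfl | hw0
  · have hδv : δ * ‖v‖ = 0 := by
      rw [inner_zero_right, norm_zero] at hvw
      nlinarith [norm_nonneg v]
    refine ⟨0, ?_⟩
    rcases mul_eq_zero.mp hδv with rfl | hv
    · simp
    · simp [hv]
  have hinner : (δ / M) ^ 2 * ‖v‖ ^ 2 * ‖w‖ ^ 2 ≤ ‖⟪w, v⟫_𝕜‖ ^ 2 := by
    rw [norm_inner_symm]
    calc (δ / M) ^ 2 * ‖v‖ ^ 2 * ‖w‖ ^ 2 ≤ (δ / M) ^ 2 * ‖v‖ ^ 2 * (M * ‖v‖) ^ 2 := by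
          gcongr
      _ ≤ (δ * ‖v‖ ^ 2) ^ 2 := by
          rcases eq_or_ne M 0 with rfl | hM
          · rw [div_zero, zero_pow two_ne_zero, zero_mul, zero_mul]
            positivity
          · exact le_of_eq (by field_simp)
      _ ≤ ‖⟪v, w⟫_𝕜‖ ^ 2 := by gcongr
  refine ⟨⟪w, v⟫_𝕜 / ((‖w‖ ^ 2 : ℝ) : 𝕜), ?_⟩
  rw [← Real.sqrt_sq (norm_nonneg v), ← Real.sqrt_mul' _ (sq_nonneg _)]
  apply Real.le_sqrt_of_sq_le
  rw [norm_sq_sub_inner_div_smul v hw0, sub_mul, one_mul]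
  exact sub_le_sub_left ((le_div_iff₀ (by positivity)).mpr hinner) _

end ProjectionOntoLine

theorem Matrix.PosDef.exists_isUnit_eq_conjTranspose_mul_self {n 𝕜 : Type*} [Fintype n]
    [DecidableEq n] [RCLike 𝕜] {D : Matrix n n 𝕜} (hD : D.PosDef) :
    ∃ S : Matrix n n 𝕜, IsUnit S ∧ D = Sᴴ * S := by
  open scoped MatrixOrder in
  obtain ⟨S, rfl⟩ := CStarAlgebra.nonneg_iff_eq_star_mul_self.mp hD.posSemidef.nonneg
  exact ⟨S, isUnit_of_mul_isUnit_right hD.isUnit, rfl⟩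

section Weighted
variable {N : ℕ}

theorem normW_nonneg (D : Matrix (Fin N) (Fin N) ℂ) (x : Fin N → ℂ) : 0 ≤ normW D x :=
  Real.sqrt_nonneg _

theorem innerW_smul_left (D : Matrix (Fin N) (Fin N) ℂ) (c : ℂ) (x y : Fin N → ℂ) :
    innerW D (c • x) y = c * innerW D x y := by
  simp only [innerW, inner2, Matrix.mulVec_smul, Pi.smul_apply, smul_eq_mul, Finset.mul_sum,
    mul_assoc]

theorem innerW_smul_right (D : Matrix (Fin N) (Fin N) ℂ) (c : ℂ) (x y : Fin N → ℂ) :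
    innerW D x (c • y) = starRingEnd ℂ c * innerW D x y := by
  simp only [innerW, inner2, Pi.smul_apply, smul_eq_mul, map_mul, Finset.mul_sum]
  exact Finset.sum_congr rfl fun _ _ => by ring

theorem normW_smul (D : Matrix (Fin N) (Fin N) ℂ) (c : ℂ) (x : Fin N → ℂ) :
    normW D (c • x) = ‖c‖ * normW D x := by
  rw [normW, normW, innerW_smul_left, innerW_smul_right, ← mul_assoc, Complex.mul_conj,
    Complex.normSq_eq_norm_sq, Complex.re_ofReal_mul, Real.sqrt_mul (by positivity),
    Real.sqrt_sq (norm_nonneg c)]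

theorem infDist_numRange_mul_normW_sq_le (D C : Matrix (Fin N) (Fin N) ℂ) (x : Fin N → ℂ) :
    Metric.infDist 0 (numRange D C) * normW D x ^ 2 ≤ ‖innerW D (C *ᵥ x) x‖ := by
  rcases eq_or_ne (normW D x) 0 with hx | hx
  · rw [hx]; simp
  set c : ℂ := ((normW D x : ℝ) : ℂ)⁻¹
  have hc : ‖c‖ = (normW D x)⁻¹ := by
    rw [norm_inv, Complex.norm_real, Real.norm_of_nonneg (normW_nonneg D x)]
  have hmem : innerW D (C *ᵥ (c • x)) (c • x) ∈ numRange D C :=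
    ⟨c • x, by rw [normW_smul, hc, inv_mul_cancel₀ hx], rfl⟩
  have := Metric.infDist_le_dist_of_mem (x := 0) hmem
  rw [dist_zero_left, Matrix.mulVec_smul, innerW_smul_left, innerW_smul_right, norm_mul,
    norm_mul, RCLike.norm_conj, hc] at this
  calc _ ≤ (normW D x)⁻¹ * ((normW D x)⁻¹ * ‖innerW D (C *ᵥ x) x‖) * normW D x ^ 2 := by gcongr
    _ = ‖innerW D (C *ᵥ x) x‖ := by field_simp

theorem opNormW_nonneg (D C : Matrix (Fin N) (Fin N) ℂ) : 0 ≤ opNormW D C :=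
  Real.sSup_nonneg fun _ ⟨_, _, ht⟩ => ht ▸ div_nonneg (normW_nonneg D _) (normW_nonneg D _)

end Weighted

section ConjTransposeMulSelf
variable {N : ℕ} {S : Matrix (Fin N) (Fin N) ℂ}

theorem innerW_conjTranspose_mul_self (x y : Fin N → ℂ) :
    innerW (Sᴴ * S) x y = ⟪WithLp.toLp 2 (S *ᵥ y), WithLp.toLp 2 (S *ᵥ x)⟫_ℂ := by
  change (Sᴴ * S) *ᵥ x ⬝ᵥ star y = S *ᵥ x ⬝ᵥ star (S *ᵥ y)
  rw [← Matrix.mulVec_mulVec, Matrix.star_mulVec, dotProduct_comm, Matrix.dotProduct_mulVec,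
    dotProduct_comm]

theorem normW_conjTranspose_mul_self (x : Fin N → ℂ) :
    normW (Sᴴ * S) x = ‖WithLp.toLp 2 (S *ᵥ x)‖ := by
  rw [normW, innerW_conjTranspose_mul_self, ← RCLike.re_to_complex, inner_self_eq_norm_sq,
    Real.sqrt_sq (norm_nonneg _)]

theorem normW_conjTranspose_mul_self_pos (hS : IsUnit S) {x : Fin N → ℂ} (hx : x ≠ 0) :
    0 < normW (Sᴴ * S) x := by
  rw [normW_conjTranspose_mul_self, norm_pos_iff, Ne, WithLp.toLp_eq_zero]
  exact fun h =>
    hx (Matrix.mulVec_injective_iff_isUnit.mpr hS (h.trans (Matrix.mulVec_zero S).symm))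

theorem normW_mulVec_le_opNormW (hS : IsUnit S) (C : Matrix (Fin N) (Fin N) ℂ) (x : Fin N → ℂ) :
    normW (Sᴴ * S) (C *ᵥ x) ≤ opNormW (Sᴴ * S) C * normW (Sᴴ * S) x := by
  set T := Matrix.toEuclideanCLM (n := Fin N) (𝕜 := ℂ) (S * C * S⁻¹)
  have hT (y : Fin N → ℂ) : normW (Sᴴ * S) (C *ᵥ y) = ‖T (WithLp.toLp 2 (S *ᵥ y))‖ := by
    rw [normW_conjTranspose_mul_self, Matrix.toEuclideanCLM_toLp, Matrix.mulVec_mulVec,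
      Matrix.mulVec_mulVec, Matrix.mul_assoc (S * C),
      Matrix.nonsing_inv_mul S ((Matrix.isUnit_iff_isUnit_det S).mp hS), Matrix.mul_one]
  rcases eq_or_ne x 0 with rfl | hx
  · simp [normW, innerW, inner2]
  have hbdd : BddAbove
      {t : ℝ | ∃ y : Fin N → ℂ, y ≠ 0 ∧ t = normW (Sᴴ * S) (C *ᵥ y) / normW (Sᴴ * S) y} := by
    refine ⟨‖T‖, ?_⟩
    rintro _ ⟨y, -, rfl⟩
    rw [hT, normW_conjTranspose_mul_self]
    exact div_le_of_le_mul₀ (norm_nonneg _) (norm_nonneg _) (T.le_opNorm _)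
  rw [← div_le_iff₀ (normW_conjTranspose_mul_self_pos hS hx)]
  exact le_csSup hbdd ⟨x, hx, rfl⟩

theorem infDist_numRange_le_opNormW (hS : IsUnit S) (C : Matrix (Fin N) (Fin N) ℂ) :
    Metric.infDist 0 (numRange (Sᴴ * S) C) ≤ opNormW (Sᴴ * S) C := by
  rcases (numRange (Sᴴ * S) C).eq_empty_or_nonempty with h | ⟨z, x, hx, rfl⟩
  · rw [h, Metric.infDist_empty]
    exact opNormW_nonneg _ _
  calc Metric.infDist 0 (numRange (Sᴴ * S) C) ≤ ‖innerW (Sᴴ * S) (C *ᵥ x) x‖ := by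
        simpa using Metric.infDist_le_dist_of_mem (x := 0)
          (show innerW (Sᴴ * S) (C *ᵥ x) x ∈ numRange (Sᴴ * S) C from ⟨x, hx, rfl⟩)
    _ ≤ normW (Sᴴ * S) (C *ᵥ x) * normW (Sᴴ * S) x := by
        rw [innerW_conjTranspose_mul_self, normW_conjTranspose_mul_self,
          normW_conjTranspose_mul_self, mul_comm]
        exact norm_inner_le_norm _ _
    _ ≤ opNormW (Sᴴ * S) C * normW (Sᴴ * S) x * normW (Sᴴ * S) x := by
        gcongr
        exact normW_mulVec_le_opNormW hS C x
    _ = opNormW (Sᴴ * S) C := by rw [hx, mul_one, mul_one]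

theorem exists_normW_sub_smul_mulVec_le (hS : IsUnit S) (C : Matrix (Fin N) (Fin N) ℂ)
    (r : Fin N → ℂ) :
    ∃ α : ℂ, normW (Sᴴ * S) (r - α • C *ᵥ r) ≤
      √(1 - (Metric.infDist 0 (numRange (Sᴴ * S) C) / opNormW (Sᴴ * S) C) ^ 2) *
        normW (Sᴴ * S) r := by
  have hvw := infDist_numRange_mul_normW_sq_le (Sᴴ * S) C r
  have hw := normW_mulVec_le_opNormW hS C r
  rw [innerW_conjTranspose_mul_self, normW_conjTranspose_mul_self] at hvw
  rw [normW_conjTranspose_mul_self, normW_conjTranspose_mul_self] at hw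
  obtain ⟨α, hα⟩ := exists_norm_sub_smul_le Metric.infDist_nonneg hvw hw
  refine ⟨α, ?_⟩
  rwa [normW_conjTranspose_mul_self, normW_conjTranspose_mul_self, Matrix.mulVec_sub,
    Matrix.mulVec_smul, WithLp.toLp_sub, WithLp.toLp_smul]

end ConjTransposeMulSelf

section Krylov
variable {N : ℕ} (C : Matrix (Fin N) (Fin N) ℂ) (r : Fin N → ℂ)

theorem krylov_le_succ (m : ℕ) : krylov C r m ≤ krylov C r (m + 1) :=
  Submodule.span_mono fun _ ⟨j, hj, hv⟩ => ⟨j, Nat.lt_succ_of_lt hj, hv⟩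

theorem self_mem_krylov_succ (m : ℕ) : r ∈ krylov C r (m + 1) :=
  Submodule.subset_span ⟨0, Nat.succ_pos m, by rw [pow_zero, Matrix.one_mulVec]⟩

theorem mulVec_mem_krylov_succ {m : ℕ} {v : Fin N → ℂ} (hv : v ∈ krylov C r m) :
    C *ᵥ v ∈ krylov C r (m + 1) := by
  have hmap : (krylov C r m).map C.mulVecLin ≤ krylov C r (m + 1) := by
    rw [krylov, Submodule.map_span, Submodule.span_le]
    rintro _ ⟨_, ⟨j, hj, rfl⟩, rfl⟩
    exact Submodule.subset_span ⟨j + 1, by omega, by simp [Matrix.mulVec_mulVec, pow_succ']⟩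
  exact hmap (Submodule.mem_map_of_mem hv)

theorem exists_sub_mem_krylov_normW_le_pow (D : Matrix (Fin N) (Fin N) ℂ) {q : ℝ} (hq : 0 ≤ q)
    (hstep : ∀ y, ∃ α : ℂ, normW D (y - α • C *ᵥ y) ≤ q * normW D y) (d x0 : Fin N → ℂ)
    (m : ℕ) : ∃ x, x - x0 ∈ krylov C (C *ᵥ x0 - d) m ∧
      normW D (C *ᵥ x - d) ≤ q ^ m * normW D (C *ᵥ x0 - d) := by
  induction m with
  | zero => exact ⟨x0, by simp, by simp⟩
  | succ m ih =>
    obtain ⟨x, hxK, hx⟩ := ih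
    obtain ⟨α, hα⟩ := hstep (C *ᵥ x - d)
    have hr : C *ᵥ x - d ∈ krylov C (C *ᵥ x0 - d) (m + 1) := by
      have : C *ᵥ x - d = C *ᵥ (x - x0) + (C *ᵥ x0 - d) := by rw [Matrix.mulVec_sub]; abel
      rw [this]
      exact add_mem (mulVec_mem_krylov_succ C _ hxK) (self_mem_krylov_succ C _ m)
    refine ⟨x - α • (C *ᵥ x - d), ?_, ?_⟩
    · rw [sub_right_comm]
      exact sub_mem (krylov_le_succ C _ m hxK) (Submodule.smul_mem _ α hr)
    · calc normW D (C *ᵥ (x - α • (C *ᵥ x - d)) - d)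
          = normW D ((C *ᵥ x - d) - α • C *ᵥ (C *ᵥ x - d)) := by
            rw [Matrix.mulVec_sub, Matrix.mulVec_smul, sub_right_comm]
        _ ≤ q * normW D (C *ᵥ x - d) := hα
        _ ≤ q * (q ^ m * normW D (C *ᵥ x0 - d)) := by gcongr
        _ = q ^ (m + 1) * normW D (C *ᵥ x0 - d) := by ring

end Krylov

theorem elman_estimate_weighted_GMRES_general {N : ℕ}
    (D C : Matrix (Fin N) (Fin N) ℂ) (hD : D.PosDef) :
    Metric.infDist (0 : ℂ) (numRange D C) ≤ opNormW D C ∧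
    ∀ (d x0 : Fin N → ℂ) (m : ℕ),
      sInf {t : ℝ | ∃ x : Fin N → ℂ,
          x - x0 ∈ krylov C (C.mulVec x0 - d) m ∧ t = normW D (C.mulVec x - d)} ≤
        Real.sqrt (1 - (Metric.infDist (0 : ℂ) (numRange D C) / opNormW D C) ^ 2) ^ m *
          normW D (C.mulVec x0 - d) := by
  obtain ⟨S, hS, rfl⟩ := hD.exists_isUnit_eq_conjTranspose_mul_self
  refine ⟨infDist_numRange_le_opNormW hS C, fun d x0 m => ?_⟩
  obtain ⟨x, hxK, hx⟩ := exists_sub_mem_krylov_normW_le_pow C (Sᴴ * S) (Real.sqrt_nonneg _)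
    (exists_normW_sub_smul_mulVec_le hS C) d x0 m
  have hbdd : BddBelow {t : ℝ | ∃ x : Fin N → ℂ,
      x - x0 ∈ krylov C (C *ᵥ x0 - d) m ∧ t = normW (Sᴴ * S) (C *ᵥ x - d)} :=
    ⟨0, by rintro _ ⟨y, -, rfl⟩; exact normW_nonneg _ _⟩
  exact (csInf_le hbdd ⟨x, hxK, rfl⟩).trans hx

/-- **Elman estimate for weighted GMRES** (Theorem 5.6). -/
theorem elman_estimate_weighted_GMRES {N : ℕ} (hN : 1 ≤ N)
    (D C : Matrix (Fin N) (Fin N) ℂ) (hD : D.PosDef)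
    (hδ : 0 < Metric.infDist (0 : ℂ) (numRange D C)) :
    Metric.infDist (0 : ℂ) (numRange D C) ≤ opNormW D C ∧
    ∀ (d x0 : Fin N → ℂ) (m : ℕ),
      sInf {t : ℝ | ∃ x : Fin N → ℂ,
          x - x0 ∈ krylov C (C.mulVec x0 - d) m ∧ t = normW D (C.mulVec x - d)} ≤
        Real.sqrt (1 - (Metric.infDist (0 : ℂ) (numRange D C) / opNormW D C) ^ 2) ^ m *
          normW D (C.mulVec x0 - d) :=
  elman_estimate_weighted_GMRES_general D C hD
end
end

section
/- (One-step contraction lemma underlying the Elman estimate.) Let D ∈ ℂ^{N×N} be Hermitian positive definite and let C ∈ ℂ^{N×N} satisfy δ := dist(0, W_D(C)) > 0. Then for every x ∈ ℂ^N there exists γ ∈ ℂ such that ‖x − γ C x‖_D² ≤ (1 − (δ/‖C‖_D)²) · ‖x‖_D². -/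
open scoped ComplexOrder

noncomputable section

/-!
Choose `γ` so that `γ • C x` is the `D`-orthogonal projection `p` of `x` onto the line `ℂ • C x`.
By Pythagoras `‖x - γ • C x‖² = ‖x‖² - ‖p‖²`, and `‖p‖ ‖C x‖ = |(C x, x)_D|` with
`|(C x, x)_D| ≥ δ ‖x‖²` and `‖C x‖ ≤ ‖C‖ ‖x‖`, so `‖p‖ ≥ (δ / ‖C‖) ‖x‖`. Nothing depends on
coordinates: in `ℂ^N` with the inner product of `D`, `W_D(C)` and `‖C‖_D` are the numerical range
and the operator norm of `C`, and the estimate holds in any inner product space.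
-/

open scoped InnerProductSpace

section NormedSpace

variable {𝕜 E F : Type*} [NontriviallyNormedField 𝕜] [NormedAddCommGroup E] [NormedSpace 𝕜 E]
  [NormedAddCommGroup F] [NormedSpace 𝕜 F]

theorem ContinuousLinearMap.sSup_norm_apply_div_norm (T : E →L[𝕜] F) :
    sSup {t : ℝ | ∃ x : E, x ≠ 0 ∧ t = ‖T x‖ / ‖x‖} = ‖T‖ := by
  have hbound : ∀ t ∈ {t : ℝ | ∃ x : E, x ≠ 0 ∧ t = ‖T x‖ / ‖x‖}, t ≤ ‖T‖ := by
    rintro _ ⟨x, -, rfl⟩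
    exact div_le_of_le_mul₀ (norm_nonneg _) (norm_nonneg _) (T.le_opNorm x)
  refine le_antisymm (Real.sSup_le hbound (norm_nonneg _)) (T.opNorm_le_bound ?_ fun x => ?_)
  · exact Real.sSup_nonneg (by rintro _ ⟨x, -, rfl⟩; positivity)
  rcases eq_or_ne x 0 with rfl | hx
  · simp
  rw [← div_le_iff₀ (norm_pos_iff.2 hx)]
  exact le_csSup ⟨‖T‖, hbound⟩ ⟨x, hx, rfl⟩

end NormedSpace

section InnerProductSpace

variable {𝕜 E : Type*} [RCLike 𝕜] [NormedAddCommGroup E] [InnerProductSpace 𝕜 E]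

def ContinuousLinearMap.numericalRange (T : E →L[𝕜] E) : Set 𝕜 :=
  {z | ∃ x : E, ‖x‖ = 1 ∧ z = ⟪x, T x⟫_𝕜}

theorem Submodule.norm_starProjection_singleton_mul_norm (x y : E) :
    ‖(𝕜 ∙ y).starProjection x‖ * ‖y‖ = ‖⟪y, x⟫_𝕜‖ := by
  rcases eq_or_ne y 0 with rfl | hy
  · simp
  rw [Submodule.starProjection_singleton, norm_smul, norm_div, RCLike.norm_ofReal,
    abs_of_nonneg (by positivity)]
  field_simp

theorem Submodule.sq_norm_sub_starProjection (K : Submodule 𝕜 E) [K.HasOrthogonalProjection]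
    (x : E) : ‖x - K.starProjection x‖ ^ 2 = ‖x‖ ^ 2 - ‖K.starProjection x‖ ^ 2 := by
  rw [K.norm_sq_eq_add_norm_sq_starProjection x, Submodule.starProjection_orthogonal_val]
  ring

theorem exists_sq_norm_sub_smul_le {x y : E} {δ K : ℝ} (hδ : 0 ≤ δ)
    (hxy : δ * ‖x‖ ^ 2 ≤ ‖⟪x, y⟫_𝕜‖) (hy : ‖y‖ ≤ K * ‖x‖) :
    ∃ γ : 𝕜, ‖x - γ • y‖ ^ 2 ≤ (1 - (δ / K) ^ 2) * ‖x‖ ^ 2 := by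
  set p := (𝕜 ∙ y).starProjection x
  have hpy : δ * ‖x‖ ^ 2 ≤ K * ‖p‖ * ‖x‖ := calc
    δ * ‖x‖ ^ 2 ≤ ‖⟪x, y⟫_𝕜‖ := hxy
    _ = ‖p‖ * ‖y‖ := by rw [norm_inner_symm, Submodule.norm_starProjection_singleton_mul_norm]
    _ ≤ ‖p‖ * (K * ‖x‖) := by gcongr
    _ = K * ‖p‖ * ‖x‖ := by ring
  have hp : (δ / K) ^ 2 * ‖x‖ ^ 2 ≤ ‖p‖ ^ 2 := by
    rcases eq_or_ne x 0 with rfl | hx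
    · simp
    rcases eq_or_ne K 0 with rfl | hK
    · simp
    have hx' := norm_pos_iff.2 hx
    have hδx : δ * ‖x‖ ≤ K * ‖p‖ := le_of_mul_le_mul_right (by nlinarith) hx'
    rw [div_pow, div_mul_eq_mul_div, div_le_iff₀ (by positivity)]
    nlinarith [pow_le_pow_left₀ (by positivity) hδx 2]
  obtain ⟨γ, hγ⟩ : ∃ γ : 𝕜, γ • y = p := ⟨_, (Submodule.starProjection_singleton 𝕜 x).symm⟩
  refine ⟨γ, ?_⟩
  rw [hγ, Submodule.sq_norm_sub_starProjection]
  linarith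

theorem ContinuousLinearMap.infDist_zero_numericalRange_mul_sq_le (T : E →L[𝕜] E) (x : E) :
    Metric.infDist 0 T.numericalRange * ‖x‖ ^ 2 ≤ ‖⟪x, T x⟫_𝕜‖ := by
  rcases eq_or_ne x 0 with rfl | hx
  · simp
  set u := ((‖x‖⁻¹ : ℝ) : 𝕜) • x
  have hu : ‖u‖ = 1 := by simp [u, norm_smul, hx]
  have huTu : ⟪u, T u⟫_𝕜 = ((‖x‖ ^ 2)⁻¹ : ℝ) * ⟪x, T x⟫_𝕜 := by
    simp only [u, map_smul, inner_smul_left, inner_smul_right, RCLike.conj_ofReal, map_inv₀,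
      map_pow]
    ring
  have hmem : ⟪u, T u⟫_𝕜 ∈ T.numericalRange := ⟨u, hu, rfl⟩
  have hdist := Metric.infDist_le_dist_of_mem (x := 0) hmem
  rwa [dist_zero_left, huTu, norm_mul, RCLike.norm_ofReal, abs_of_pos (by positivity),
    inv_mul_eq_div, le_div_iff₀ (by positivity)] at hdist

theorem ContinuousLinearMap.exists_sq_norm_sub_smul_apply_le (T : E →L[𝕜] E) (x : E) :
    ∃ γ : 𝕜, ‖x - γ • T x‖ ^ 2 ≤ (1 - (Metric.infDist 0 T.numericalRange / ‖T‖) ^ 2) * ‖x‖ ^ 2 :=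
  exists_sq_norm_sub_smul_le Metric.infDist_nonneg (T.infDist_zero_numericalRange_mul_sq_le x)
    (T.le_opNorm x)

end InnerProductSpace

-- `hD` is part of the type so that the `D`-inner product can be an instance on it.
def WeightedSpace {N : ℕ} (D : Matrix (Fin N) (Fin N) ℂ) (_ : D.PosDef) : Type := Fin N → ℂ

namespace WeightedSpace

variable {N : ℕ} {D : Matrix (Fin N) (Fin N) ℂ} (hD : D.PosDef)

instance : NormedAddCommGroup (WeightedSpace D hD) := D.toNormedAddCommGroup hD

instance : InnerProductSpace ℂ (WeightedSpace D hD) := D.toInnerProductSpace hD.posSemidef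

def equiv : (Fin N → ℂ) ≃ₗ[ℂ] WeightedSpace D hD := LinearEquiv.refl ℂ _

instance : FiniteDimensional ℂ (WeightedSpace D hD) := (equiv hD).finiteDimensional

theorem norm_equiv (x : Fin N → ℂ) : ‖equiv hD x‖ = normW D x := by
  rw [norm_eq_sqrt_re_inner (𝕜 := ℂ)]
  rfl

def mulVecCLM (C : Matrix (Fin N) (Fin N) ℂ) : WeightedSpace D hD →L[ℂ] WeightedSpace D hD :=
  LinearMap.toContinuousLinearMap ((equiv hD).conj C.mulVecLin)

theorem mulVecCLM_equiv (C : Matrix (Fin N) (Fin N) ℂ) (x : Fin N → ℂ) :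
    mulVecCLM hD C (equiv hD x) = equiv hD (C.mulVec x) :=
  rfl

theorem numRange_eq_numericalRange (C : Matrix (Fin N) (Fin N) ℂ) :
    numRange D C = (mulVecCLM hD C).numericalRange :=
  rfl

theorem opNormW_eq_opNorm (C : Matrix (Fin N) (Fin N) ℂ) :
    opNormW D C = ‖mulVecCLM hD C‖ := by
  rw [← ContinuousLinearMap.sSup_norm_apply_div_norm]
  rfl

end WeightedSpace

theorem one_step_contraction_general {N : ℕ}
    (D C : Matrix (Fin N) (Fin N) ℂ) (hD : D.PosDef) :
    ∀ x : Fin N → ℂ, ∃ γ : ℂ,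
      normW D (x - γ • C.mulVec x) ^ 2 ≤
        (1 - (Metric.infDist (0 : ℂ) (numRange D C) / opNormW D C) ^ 2) *
          normW D x ^ 2 := by
  intro x
  obtain ⟨γ, hγ⟩ := (WeightedSpace.mulVecCLM hD C).exists_sq_norm_sub_smul_apply_le
    (WeightedSpace.equiv hD x)
  refine ⟨γ, ?_⟩
  rwa [WeightedSpace.numRange_eq_numericalRange hD, WeightedSpace.opNormW_eq_opNorm hD,
    ← WeightedSpace.norm_equiv hD, ← WeightedSpace.norm_equiv hD, map_sub, map_smul,
    ← WeightedSpace.mulVecCLM_equiv]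

/-- **One-step contraction lemma** underlying the Elman estimate. -/
theorem one_step_contraction {N : ℕ} (hN : 1 ≤ N)
    (D C : Matrix (Fin N) (Fin N) ℂ) (hD : D.PosDef)
    (hδ : 0 < Metric.infDist (0 : ℂ) (numRange D C)) :
    ∀ x : Fin N → ℂ, ∃ γ : ℂ,
      normW D (x - γ • C.mulVec x) ^ 2 ≤
        (1 - (Metric.infDist (0 : ℂ) (numRange D C) / opNormW D C) ^ 2) *
          normW D x ^ 2 :=
  one_step_contraction_general D C hD
end
end

section
/- (Corollary 5.7 of the paper.) Let D ∈ ℂ^{N×N} be Hermitian positive definite, let C ∈ ℂ^{N×N}, and suppose ‖I − C‖_D ≤ α for some α ∈ [0, 1). Then dist(0, W_D(C)) ≥ 1 − α > 0 (so 0 ∉ W_D(C)) and ‖C‖_D ≤ 1 + α; consequently, with cos β := dist(0, W_D(C))/‖C‖_D and sin β := (1 − cos²β)^{1/2}, one has cos β ≥ (1−α)/(1+α) and sin β ≤ 2√α/(1+α). -/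
/-!
For a unit vector `x`, `1 - (C x, x)_D = ((I - C) x, x)_D`, whose modulus is at most
`‖I - C‖_D ≤ α` by Cauchy–Schwarz; hence every point of `W_D(C)` has modulus at least `1 - α`.
Writing `C = I - (I - C)` gives `‖C‖_D ≤ 1 + α`, and the bounds on `cos β` and `sin β` follow
by arithmetic. All weighted quantities are transported to Euclidean ones by `x ↦ D^{1/2} x`.
-/

open scoped ComplexOrder

noncomputable section

theorem LinearMap.exists_norm_apply_comp_le_of_injective {𝕜 V E : Type*}
    [NontriviallyNormedField 𝕜] [CompleteSpace 𝕜] [AddCommGroup V] [Module 𝕜 V]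
    [NormedAddCommGroup E] [NormedSpace 𝕜 E] [FiniteDimensional 𝕜 E]
    (T : V →ₗ[𝕜] E) (hT : Function.Injective T) (A : V →ₗ[𝕜] V) :
    ∃ K, ∀ x, ‖T (A x)‖ ≤ K * ‖T x‖ := by
  obtain ⟨L, hL⟩ := T.exists_leftInverse_of_injective (LinearMap.ker_eq_bot.2 hT)
  let M : E →L[𝕜] E := LinearMap.toContinuousLinearMap (T ∘ₗ A ∘ₗ L)
  refine ⟨‖M‖, fun x ↦ ?_⟩
  have hLT : L (T x) = x := LinearMap.congr_fun hL x
  calc ‖T (A x)‖ = ‖M (T x)‖ := by simp [M, hLT]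
    _ ≤ ‖M‖ * ‖T x‖ := M.le_opNorm _

theorem Real.sqrt_one_sub_sq_le_of_div_le {α t : ℝ} (hα0 : 0 ≤ α) (hα1 : α ≤ 1)
    (ht : (1 - α) / (1 + α) ≤ t) :
    √(1 - t ^ 2) ≤ 2 * √α / (1 + α) := by
  have hs : 0 ≤ (1 - α) / (1 + α) := div_nonneg (by linarith) (by linarith)
  calc √(1 - t ^ 2) ≤ √(1 - ((1 - α) / (1 + α)) ^ 2) := by gcongr
    _ = √((2 * √α / (1 + α)) ^ 2) := by
      congr 1
      field_simp
      rw [Real.sq_sqrt hα0]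
      ring
    _ = 2 * √α / (1 + α) := Real.sqrt_sq (by positivity)

open Matrix
open scoped MatrixOrder InnerProductSpace

variable {N : ℕ} {D : Matrix (Fin N) (Fin N) ℂ}

def sqrtEmbedding (D : Matrix (Fin N) (Fin N) ℂ) : (Fin N → ℂ) →ₗ[ℂ] EuclideanSpace ℂ (Fin N) :=
  (WithLp.linearEquiv 2 ℂ (Fin N → ℂ)).symm.toLinearMap ∘ₗ (CFC.sqrt D).mulVecLin

theorem sqrtEmbedding_apply (D : Matrix (Fin N) (Fin N) ℂ) (x : Fin N → ℂ) :
    sqrtEmbedding D x = WithLp.toLp 2 (CFC.sqrt D *ᵥ x) :=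
  rfl

theorem innerW_eq_inner_sqrtEmbedding (hD : D.PosSemidef) (x y : Fin N → ℂ) :
    innerW D x y = ⟪sqrtEmbedding D y, sqrtEmbedding D x⟫_ℂ := by
  have hS : (CFC.sqrt D)ᴴ = CFC.sqrt D := (nonneg_iff_posSemidef.1 (CFC.sqrt_nonneg D)).1
  have hD' : D = CFC.sqrt D * CFC.sqrt D := (CFC.sqrt_mul_sqrt_self D hD.nonneg).symm
  rw [sqrtEmbedding_apply, sqrtEmbedding_apply, EuclideanSpace.inner_toLp_toLp, star_mulVec, hS,
    dotProduct_comm, ← dotProduct_mulVec, mulVec_mulVec, ← hD', dotProduct_comm]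
  simp [innerW, inner2, dotProduct]

theorem normW_eq_norm_sqrtEmbedding (hD : D.PosSemidef) (x : Fin N → ℂ) :
    normW D x = ‖sqrtEmbedding D x‖ := by
  rw [normW, innerW_eq_inner_sqrtEmbedding hD, norm_eq_sqrt_re_inner (𝕜 := ℂ)]
  rfl

theorem innerW_self (hD : D.PosSemidef) (x : Fin N → ℂ) : innerW D x x = (normW D x : ℂ) ^ 2 := by
  rw [innerW_eq_inner_sqrtEmbedding hD, normW_eq_norm_sqrtEmbedding hD, inner_self_eq_norm_sq_to_K]
  rfl

theorem innerW_sub_left (hD : D.PosSemidef) (x y z : Fin N → ℂ) :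
    innerW D (x - y) z = innerW D x z - innerW D y z := by
  simp only [innerW_eq_inner_sqrtEmbedding hD, map_sub, inner_sub_right]

theorem norm_innerW_le (hD : D.PosSemidef) (x y : Fin N → ℂ) :
    ‖innerW D x y‖ ≤ normW D x * normW D y := by
  rw [innerW_eq_inner_sqrtEmbedding hD, normW_eq_norm_sqrtEmbedding hD,
    normW_eq_norm_sqrtEmbedding hD, mul_comm]
  exact norm_inner_le_norm _ _

theorem normW_sub_le (hD : D.PosSemidef) (x y : Fin N → ℂ) :
    normW D (x - y) ≤ normW D x + normW D y := by
  simp only [normW_eq_norm_sqrtEmbedding hD, map_sub]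
  exact norm_sub_le _ _

theorem normW_pos (hD : D.PosDef) {x : Fin N → ℂ} (hx : x ≠ 0) : 0 < normW D x := by
  rw [normW, innerW, inner2, Real.sqrt_pos]
  simpa [dotProduct, mul_comm] using hD.re_dotProduct_pos hx

theorem sqrtEmbedding_injective (hD : D.PosDef) : Function.Injective (sqrtEmbedding D) := by
  refine (injective_iff_map_eq_zero _).2 fun x hx ↦ ?_
  by_contra hx0
  have := normW_pos hD hx0
  rw [normW_eq_norm_sqrtEmbedding hD.posSemidef, hx, norm_zero] at this
  exact this.false

theorem bddAbove_normW_mulVec_div (hD : D.PosDef) (A : Matrix (Fin N) (Fin N) ℂ) :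
    BddAbove {t : ℝ | ∃ x : Fin N → ℂ, x ≠ 0 ∧ t = normW D (A *ᵥ x) / normW D x} := by
  obtain ⟨K, hK⟩ := (sqrtEmbedding D).exists_norm_apply_comp_le_of_injective
    (sqrtEmbedding_injective hD) A.mulVecLin
  refine ⟨K, ?_⟩
  rintro _ ⟨x, hx, rfl⟩
  rw [div_le_iff₀ (normW_pos hD hx), normW_eq_norm_sqrtEmbedding hD.posSemidef,
    normW_eq_norm_sqrtEmbedding hD.posSemidef]
  exact hK x

theorem normW_mulVec_le (hD : D.PosDef) (A : Matrix (Fin N) (Fin N) ℂ) (x : Fin N → ℂ) :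
    normW D (A *ᵥ x) ≤ opNormW D A * normW D x := by
  rcases eq_or_ne x 0 with rfl | hx
  · simp [normW_eq_norm_sqrtEmbedding hD.posSemidef]
  rw [← div_le_iff₀ (normW_pos hD hx)]
  exact le_csSup (bddAbove_normW_mulVec_div hD A) ⟨x, hx, rfl⟩

theorem opNormW_le (hN : 1 ≤ N) (hD : D.PosDef) (A : Matrix (Fin N) (Fin N) ℂ) {c : ℝ}
    (hc : ∀ x : Fin N → ℂ, x ≠ 0 → normW D (A *ᵥ x) ≤ c * normW D x) :
    opNormW D A ≤ c := by
  have : Nonempty (Fin N) := ⟨⟨0, hN⟩⟩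
  obtain ⟨x₀, hx₀⟩ := exists_ne (0 : Fin N → ℂ)
  refine csSup_le ⟨_, x₀, hx₀, rfl⟩ ?_
  rintro _ ⟨x, hx, rfl⟩
  rw [div_le_iff₀ (normW_pos hD hx)]
  exact hc x hx

theorem numRange_nonempty (hN : 1 ≤ N) (hD : D.PosDef) (A : Matrix (Fin N) (Fin N) ℂ) :
    (numRange D A).Nonempty := by
  have : Nonempty (Fin N) := ⟨⟨0, hN⟩⟩
  obtain ⟨x, hx⟩ := exists_ne (0 : Fin N → ℂ)
  have hTx : sqrtEmbedding D x ≠ 0 := (map_ne_zero_iff _ (sqrtEmbedding_injective hD)).2 hx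
  let u : Fin N → ℂ := (‖sqrtEmbedding D x‖ : ℂ)⁻¹ • x
  have hu : normW D u = 1 := by
    rw [normW_eq_norm_sqrtEmbedding hD.posSemidef, map_smul]
    exact norm_smul_inv_norm hTx
  exact ⟨_, u, hu, rfl⟩

theorem norm_le_opNormW_of_mem_numRange (hD : D.PosDef) {A : Matrix (Fin N) (Fin N) ℂ} {z : ℂ}
    (hz : z ∈ numRange D A) : ‖z‖ ≤ opNormW D A := by
  obtain ⟨x, hx, rfl⟩ := hz
  calc ‖innerW D (A *ᵥ x) x‖ ≤ normW D (A *ᵥ x) * normW D x := norm_innerW_le hD.posSemidef _ _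
    _ ≤ opNormW D A * normW D x * normW D x := by gcongr; exact normW_mulVec_le hD A x
    _ = opNormW D A := by rw [hx, mul_one, mul_one]

theorem one_sub_mem_numRange_one_sub (hD : D.PosSemidef) {A : Matrix (Fin N) (Fin N) ℂ} {z : ℂ}
    (hz : z ∈ numRange D A) : 1 - z ∈ numRange D (1 - A) := by
  obtain ⟨x, hx, rfl⟩ := hz
  refine ⟨x, hx, ?_⟩
  rw [sub_mulVec, one_mulVec, innerW_sub_left hD, innerW_self hD, hx]
  norm_num

theorem one_sub_le_norm_of_mem_numRange (hD : D.PosDef) {C : Matrix (Fin N) (Fin N) ℂ} {α : ℝ}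
    (h : opNormW D (1 - C) ≤ α) {z : ℂ} (hz : z ∈ numRange D C) : 1 - α ≤ ‖z‖ := by
  have h1z := norm_le_opNormW_of_mem_numRange hD (one_sub_mem_numRange_one_sub hD.posSemidef hz)
  have := norm_sub_norm_le (1 : ℂ) (1 - z)
  rw [norm_one, sub_sub_cancel] at this
  linarith

theorem opNormW_le_one_add (hN : 1 ≤ N) (hD : D.PosDef) {C : Matrix (Fin N) (Fin N) ℂ} {α : ℝ}
    (h : opNormW D (1 - C) ≤ α) : opNormW D C ≤ 1 + α := by
  refine opNormW_le hN hD C fun x _ ↦ ?_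
  have hCx : C *ᵥ x = x - (1 - C) *ᵥ x := by rw [sub_mulVec, one_mulVec, sub_sub_cancel]
  calc normW D (C *ᵥ x) ≤ normW D x + normW D ((1 - C) *ᵥ x) := hCx ▸ normW_sub_le hD.posSemidef _ _
    _ ≤ normW D x + opNormW D (1 - C) * normW D x := by gcongr; exact normW_mulVec_le hD _ x
    _ ≤ normW D x + α * normW D x := by gcongr; exact Real.sqrt_nonneg _
    _ = (1 + α) * normW D x := by ring

/-- **Corollary 5.7**: field-of-values bounds from `‖I - C‖_D ≤ α`. -/
theorem fov_bounds_from_nearby_identity {N : ℕ} (hN : 1 ≤ N)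
    (D C : Matrix (Fin N) (Fin N) ℂ) (hD : D.PosDef)
    (α : ℝ) (hα0 : 0 ≤ α) (hα1 : α < 1)
    (h : opNormW D (1 - C) ≤ α) :
    1 - α ≤ Metric.infDist (0 : ℂ) (numRange D C) ∧
    (0 : ℂ) ∉ numRange D C ∧
    opNormW D C ≤ 1 + α ∧
    (1 - α) / (1 + α) ≤ Metric.infDist (0 : ℂ) (numRange D C) / opNormW D C ∧
    Real.sqrt (1 - (Metric.infDist (0 : ℂ) (numRange D C) / opNormW D C) ^ 2) ≤
      2 * Real.sqrt α / (1 + α) := by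
  have hne := numRange_nonempty hN hD C
  have hlow : ∀ z ∈ numRange D C, 1 - α ≤ ‖z‖ := fun z hz ↦
    one_sub_le_norm_of_mem_numRange hD h hz
  have hdist : 1 - α ≤ Metric.infDist (0 : ℂ) (numRange D C) :=
    (Metric.le_infDist hne).2 fun z hz ↦ by simpa using hlow z hz
  have hC : opNormW D C ≤ 1 + α := opNormW_le_one_add hN hD h
  obtain ⟨z, hz⟩ := hne
  have hCpos : 0 < opNormW D C := by
    linarith [hlow z hz, norm_le_opNormW_of_mem_numRange hD hz]
  have hratio : (1 - α) / (1 + α) ≤ Metric.infDist (0 : ℂ) (numRange D C) / opNormW D C :=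
    div_le_div₀ (by linarith) hdist hCpos hC
  refine ⟨hdist, fun h0 ↦ ?_, hC, hratio, Real.sqrt_one_sub_sq_le_of_div_le hα0 hα1.le hratio⟩
  have := hlow 0 h0
  rw [norm_zero] at this
  linarith
end
end

section
/- (Abstract form of Lemma 5.4, 'bound for data in the dual space', carrying exactly the hypotheses used in its proof.) Let V be a normed complex vector space with norm ‖·‖, let ⟨·,·⟩₀ be a positive-semidefinite Hermitian sesquilinear form on V with associated seminorm ‖v‖₀ := ⟨v,v⟩₀^{1/2}, and let k > 0 satisfy k‖v‖₀ ≤ ‖v‖ for all v ∈ V. Let a : V × V → ℂ be a sesquilinear form, and let constants A_min > 0, 0 < n_min ≤ n_max, C_bound ≥ 0 be such that: (Gårding inequality) Re a(v,v) ≥ min{A_min, n_min}·‖v‖² − 2k²n_max·‖v‖₀² for all v ∈ V. Let u ∈ V, M ≥ 0, and F : V → ℂ be such that a(u,v) = F(v) for all v ∈ V and |F(v)| ≤ M‖v‖ for all v ∈ V, and assume (adjoint solvability with the nontrapping bound) there exists w ∈ V with a(v,w) = ⟨v,u⟩₀ for all v ∈ V and ‖w‖ ≤ C_bound·‖u‖₀.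 Then ‖u‖ ≤ (1/min{A_min, n_min})·(1 + 2 C_bound n_max k)·M. -/
/-! Test the equation for `u` against `u` itself and against the adjoint solution `w`: this
bounds `Re a(u,u) ≤ M‖u‖` and `Re ⟨u,u⟩₀ = Re a(u,w) ≤ M‖w‖ ≤ M C_bound ‖u‖₀`. Inserting both into
Gårding's inequality and absorbing `k‖u‖₀ ≤ ‖u‖` gives
`min(A_min, n_min) ‖u‖² ≤ (1 + 2 C_bound n_max k) M ‖u‖`, and one divides by `‖u‖`. -/

lemma le_div_of_mul_sq_le_mul {m c x : ℝ} (hm : 0 < m) (hc : 0 ≤ c) (h : m * x ^ 2 ≤ c * x) :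
    x ≤ c / m := by
  rcases le_or_gt x 0 with hx | hx
  · exact hx.trans (div_nonneg hc hm.le)
  · rw [le_div_iff₀ hm]
    nlinarith

lemma re_apply_le_of_forall_eq {V : Type*} [NormedAddCommGroup V] {a : V → V → ℂ} {u : V}
    {F : V → ℂ} {M : ℝ} (hu : ∀ v, a u v = F v) (hF : ∀ v, ‖F v‖ ≤ M * ‖v‖) (v : V) :
    (a u v).re ≤ M * ‖v‖ :=
  hu v ▸ (Complex.re_le_norm _).trans (hF v)

theorem abstract_dual_data_bound_general
    {V : Type*} [NormedAddCommGroup V]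
    (binner : V → V → ℂ)
    (k : ℝ) (hk : 0 < k)
    (hk0 : ∀ v : V, k * Real.sqrt (binner v v).re ≤ ‖v‖)
    (a : V → V → ℂ)
    (Amin nmin nmax Cbound : ℝ)
    (hAmin : 0 < Amin) (hnmin : 0 < nmin) (hnn : nmin ≤ nmax) (hCb : 0 ≤ Cbound)
    (hGarding : ∀ v : V,
      min Amin nmin * ‖v‖ ^ 2 - 2 * k ^ 2 * nmax * (binner v v).re ≤ (a v v).re)
    (u : V) (M : ℝ) (hM : 0 ≤ M) (F : V → ℂ)
    (hu : ∀ v : V, a u v = F v)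
    (hF : ∀ v : V, ‖F v‖ ≤ M * ‖v‖)
    (w : V)
    (hw : ∀ v : V, a v w = binner v u)
    (hwb : ‖w‖ ≤ Cbound * Real.sqrt (binner u u).re) :
    ‖u‖ ≤ (1 / min Amin nmin) * (1 + 2 * Cbound * nmax * k) * M := by
  set s := Real.sqrt (binner u u).re
  have hnmax : 0 ≤ nmax := hnmin.le.trans hnn
  have h_self : (a u u).re ≤ M * ‖u‖ := re_apply_le_of_forall_eq hu hF u
  have h_dual : (binner u u).re ≤ M * (Cbound * s) :=
    hw u ▸ (re_apply_le_of_forall_eq hu hF w).trans (mul_le_mul_of_nonneg_left hwb hM)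
  have h_energy : min Amin nmin * ‖u‖ ^ 2 ≤ ((1 + 2 * Cbound * nmax * k) * M) * ‖u‖ :=
    calc min Amin nmin * ‖u‖ ^ 2
        ≤ (a u u).re + 2 * k ^ 2 * nmax * (binner u u).re := by linarith [hGarding u]
      _ ≤ M * ‖u‖ + 2 * k ^ 2 * nmax * (M * (Cbound * s)) := by gcongr
      _ = M * ‖u‖ + (2 * k * nmax * M * Cbound) * (k * s) := by ring
      _ ≤ M * ‖u‖ + (2 * k * nmax * M * Cbound) * ‖u‖ := by gcongr; exact hk0 u
      _ = ((1 + 2 * Cbound * nmax * k) * M) * ‖u‖ := by ring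
  rw [one_div_mul_eq_div, div_mul_eq_mul_div]
  exact le_div_of_mul_sq_le_mul (lt_min hAmin hnmin) (by positivity) h_energy

/-- **Abstract form of Lemma 5.4** ("bound for data in the dual space"), carrying exactly
the hypotheses used in its proof. Here `binner` is a positive-semidefinite Hermitian
sesquilinear form with associated seminorm `‖v‖₀ = √(Re ⟨v,v⟩₀)`, and `a` is a
sesquilinear form satisfying a Gårding inequality. -/
theorem abstract_dual_data_bound
    {V : Type*} [NormedAddCommGroup V] [NormedSpace ℂ V]
    (binner : V → V → ℂ)
    (hb_add : ∀ x y v : V, binner (x + y) v = binner x v + binner y v)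
    (hb_smul : ∀ (c : ℂ) (x v : V), binner (c • x) v = c * binner x v)
    (hb_herm : ∀ x y : V, binner x y = (starRingEnd ℂ) (binner y x))
    (hb_pos : ∀ v : V, 0 ≤ (binner v v).re)
    (k : ℝ) (hk : 0 < k)
    (hk0 : ∀ v : V, k * Real.sqrt (binner v v).re ≤ ‖v‖)
    (a : V → V → ℂ)
    (ha_add1 : ∀ x y v : V, a (x + y) v = a x v + a y v)
    (ha_smul1 : ∀ (c : ℂ) (x v : V), a (c • x) v = c * a x v)
    (ha_add2 : ∀ x v w : V, a x (v + w) = a x v + a x w)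
    (ha_smul2 : ∀ (c : ℂ) (x v : V), a x (c • v) = (starRingEnd ℂ) c * a x v)
    (Amin nmin nmax Cbound : ℝ)
    (hAmin : 0 < Amin) (hnmin : 0 < nmin) (hnn : nmin ≤ nmax) (hCb : 0 ≤ Cbound)
    (hGarding : ∀ v : V,
      min Amin nmin * ‖v‖ ^ 2 - 2 * k ^ 2 * nmax * (binner v v).re ≤ (a v v).re)
    (u : V) (M : ℝ) (hM : 0 ≤ M) (F : V → ℂ)
    (hu : ∀ v : V, a u v = F v)
    (hF : ∀ v : V, ‖F v‖ ≤ M * ‖v‖)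
    (w : V)
    (hw : ∀ v : V, a v w = binner v u)
    (hwb : ‖w‖ ≤ Cbound * Real.sqrt (binner u u).re) :
    ‖u‖ ≤ (1 / min Amin nmin) * (1 + 2 * Cbound * nmax * k) * M :=
  abstract_dual_data_bound_general binner k hk hk0 a Amin nmin nmax Cbound hAmin hnmin hnn hCb
    hGarding u M hM F hu hF w hw hwb
end
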